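/- arXiv:0704.2094 — 2 statements merged into one kernel-verified Lean document; each statement's English description precedes it below -/
import Mathlib

section
/- The interior wavelet of third kind ψ⁵ = φ¹_{(2i−1,2k)} + φ¹_{(2i,2k+1)} − φ¹_{(2i,2k−1)} − φ¹_{(2i+1,2k)} on the fine type-1 triangulation of mesh h/2 satisfies ⟨ψ⁵, φ⁰_{(m,n)}⟩_s = 0 for every coarse hat function φ⁰_{(m,n)} of mesh h, where ⟨u,v⟩_s = ∫ ∇u·∇v. -/
noncomputable section
open MeasureTheory

/-- The piecewise-linear hat (Courant) function of mesh size `h` centered at `p`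
on the type-1 (three-direction) triangulation of ℝ²: it is supported on the
hexagon with vertices p + (−h,−h),(0,−h),(h,0),(h,h),(0,h),(−h,0), linear on
each triangle, equals 1 at `p` and 0 at all other grid points. -/
def hat (h : ℝ) (p x : ℝ × ℝ) : ℝ :=
  max 0 (1 - (max |x.1 - p.1| (max |x.2 - p.2| |(x.1 - p.1) - (x.2 - p.2)|)) / h)

/-- Partial derivative in the x-direction. -/
def pdx (f : (ℝ × ℝ) → ℝ) (x : ℝ × ℝ) : ℝ := fderiv ℝ f x (1, 0)

/-- Partial derivative in the y-direction. -/
def pdy (f : (ℝ × ℝ) → ℝ) (x : ℝ × ℝ) : ℝ := fderiv ℝ f x (0, 1)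

/-- The Dirichlet inner product ⟨u,v⟩ₛ = ∫_{ℝ²} ∇u·∇v. -/
def dirR (u v : (ℝ × ℝ) → ℝ) : ℝ :=
  ∫ x : ℝ × ℝ, (pdx u x * pdx v x + pdy u x * pdy v x)

/-- The fine hat function of mesh h/2 centered at (a·h/2, b·h/2). -/
def fineHat (h : ℝ) (a b : ℤ) : (ℝ × ℝ) → ℝ :=
  hat (h / 2) ((a : ℝ) * (h / 2), (b : ℝ) * (h / 2))

/-- The coarse hat function of mesh h centered at (m·h, n·h). -/
def coarseHat (h : ℝ) (m n : ℤ) : (ℝ × ℝ) → ℝ :=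
  hat h ((m : ℝ) * h, (n : ℝ) * h)

/-!
On each of the six triangles `p + hexTri c j` of its support, the hat function `hat c p` is
affine with gradient `hexDir j / c`, and each triangle has area `c ^ 2 / 2`. Hence the Dirichlet
product of `hat c p` with any `V` whose derivative along `hexDir j` is a constant `g j` on
`p + hexTri c j` equals `c / 2 * ∑ j, g j`. Coarse hats are affine on every fine triangle, so
pairing the wavelet with a coarse hat is a finite computation. After translating the wavelet to
the origin, the reflections `x ↦ -x` and `x ↦ x.swap` change its sign. This leaves the coarse
hats centred at hexagonal distance at least `2 h`, whose gradient vanishes on the support of the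
wavelet, and the coarse hat at `(h, 0)`, against which the four fine hats give `0, 0, -1/2, 1/2`.
-/

open Set Filter

def hexNorm (w : ℝ × ℝ) : ℝ := max |w.1| (max |w.2| |w.1 - w.2|)

lemma hexNorm_neg (w : ℝ × ℝ) : hexNorm (-w) = hexNorm w := by
  simp only [hexNorm, Prod.fst_neg, Prod.snd_neg, abs_neg, neg_sub_neg, abs_sub_comm w.2 w.1]

lemma hexNorm_sub_comm (a b : ℝ × ℝ) : hexNorm (a - b) = hexNorm (b - a) := by
  rw [← hexNorm_neg, neg_sub]

lemma hexNorm_swap (w : ℝ × ℝ) : hexNorm w.swap = hexNorm w := by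
  simp only [hexNorm, Prod.fst_swap, Prod.snd_swap, abs_sub_comm w.2 w.1, max_left_comm]

lemma hexNorm_add_le (a b : ℝ × ℝ) : hexNorm (a + b) ≤ hexNorm a + hexNorm b := by
  simp only [hexNorm, Prod.fst_add, Prod.snd_add, add_sub_add_comm]
  exact max_le ((abs_add_le _ _).trans (add_le_add (le_max_left _ _) (le_max_left _ _)))
    (max_le ((abs_add_le _ _).trans (add_le_add (le_max_of_le_right (le_max_left _ _))
      (le_max_of_le_right (le_max_left _ _))))
    ((abs_add_le _ _).trans (add_le_add (le_max_of_le_right (le_max_right _ _))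
      (le_max_of_le_right (le_max_right _ _)))))

lemma hexNorm_mul_right (a b t : ℝ) (ht : 0 ≤ t) :
    hexNorm (a * t, b * t) = hexNorm (a, b) * t := by
  simp only [hexNorm, ← sub_mul, abs_mul, abs_of_nonneg ht, max_mul_of_nonneg _ _ ht]

lemma abs_fst_le_hexNorm (w : ℝ × ℝ) : |w.1| ≤ hexNorm w := le_max_left _ _

lemma abs_fst_sub_snd_le_hexNorm (w : ℝ × ℝ) : |w.1 - w.2| ≤ hexNorm w :=
  le_max_of_le_right (le_max_right _ _)

/-- The triangles of the hexagon `hexNorm w < c`, counterclockwise from the one between the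
positive `x`-axis and the diagonal; `hexDir j / c` is the gradient of `hat c 0` on `hexTri c j`. -/
def hexTri (c : ℝ) : Fin 6 → Set (ℝ × ℝ) :=
  ![regionBetween (fun _ => 0) id (Ioo 0 c),
    regionBetween id (fun _ => c) (Ioo 0 c),
    regionBetween (fun _ => 0) (· + c) (Ioo (-c) 0),
    regionBetween id (fun _ => 0) (Ioo (-c) 0),
    regionBetween (fun _ => -c) id (Ioo (-c) 0),
    regionBetween (· - c) (fun _ => 0) (Ioo 0 c)]

def hexDir : Fin 6 → ℝ × ℝ := ![(-1, 0), (0, -1), (1, -1), (1, 0), (0, 1), (-1, 1)]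

lemma eq_of_mem_hexTri {c : ℝ} {j k : Fin 6} {w : ℝ × ℝ} (hj : w ∈ hexTri c j)
    (hk : w ∈ hexTri c k) : j = k := by
  fin_cases j <;> fin_cases k <;>
    simp only [hexTri, regionBetween, mem_Ioo, id_eq, Fin.zero_eta, Fin.mk_one, Fin.reduceFinMk,
      Matrix.cons_val, mem_ofPred_eq] at hj hk ⊢ <;>
    first | rfl | linarith

lemma hexNorm_eq_of_mem_hexTri {c : ℝ} {j : Fin 6} {w : ℝ × ℝ} (hw : w ∈ hexTri c j) :
    hexNorm w = -((hexDir j).1 * w.1 + (hexDir j).2 * w.2) := by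
  rw [hexNorm, abs_eq_max_neg, abs_eq_max_neg, abs_eq_max_neg]
  fin_cases j <;>
    simp only [hexTri, hexDir, regionBetween, mem_Ioo, id_eq, Fin.zero_eta, Fin.mk_one,
      Fin.reduceFinMk, Matrix.cons_val, mem_ofPred_eq] at hw ⊢ <;>
    obtain ⟨⟨h1, h2⟩, h3, h4⟩ := hw <;>
    refine le_antisymm (max_le (max_le ?_ ?_) (max_le (max_le ?_ ?_) (max_le ?_ ?_)))
      (not_lt.1 fun h => ?_)
  all_goals first
    | linarith
    | (simp only [max_lt_iff] at h; obtain ⟨⟨h5, h6⟩, ⟨h7, h8⟩, h9, h10⟩ := h; linarith)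

lemma hexNorm_lt_of_mem_hexTri {c : ℝ} {j : Fin 6} {w : ℝ × ℝ} (hw : w ∈ hexTri c j) :
    hexNorm w < c := by
  rw [hexNorm_eq_of_mem_hexTri hw]
  fin_cases j <;>
    simp only [hexTri, hexDir, regionBetween, mem_Ioo, id_eq, Fin.zero_eta, Fin.mk_one,
      Fin.reduceFinMk, Matrix.cons_val, mem_ofPred_eq] at hw ⊢ <;>
    linarith

lemma exists_mem_hexTri_or_lt_hexNorm {c : ℝ} {w : ℝ × ℝ}
    (h0 : w.1 ≠ 0 ∧ w.2 ≠ 0 ∧ w.1 - w.2 ≠ 0) (hp : w.1 ≠ c ∧ w.2 ≠ c ∧ w.1 - w.2 ≠ c)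
    (hm : w.1 ≠ -c ∧ w.2 ≠ -c ∧ w.1 - w.2 ≠ -c) :
    (∃ j, w ∈ hexTri c j) ∨ c < hexNorm w := by
  by_cases hin : |w.1| < c ∧ |w.2| < c ∧ |w.1 - w.2| < c
  · left
    simp only [abs_lt] at hin
    obtain ⟨⟨a1, a2⟩, ⟨b1, b2⟩, d1, d2⟩ := hin
    rcases lt_or_gt_of_ne h0.1 with s1 | s1 <;> rcases lt_or_gt_of_ne h0.2.1 with s2 | s2 <;>
      rcases lt_or_gt_of_ne h0.2.2 with s3 | s3
    all_goals first
      | (exfalso; linarith)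
      | (refine ⟨0, ?_⟩
         simp only [hexTri, regionBetween, mem_Ioo, id_eq, Matrix.cons_val, mem_ofPred_eq]
         refine ⟨⟨?_, ?_⟩, ?_, ?_⟩ <;> linarith)
      | (refine ⟨1, ?_⟩
         simp only [hexTri, regionBetween, mem_Ioo, id_eq, Matrix.cons_val, mem_ofPred_eq]
         refine ⟨⟨?_, ?_⟩, ?_, ?_⟩ <;> linarith)
      | (refine ⟨2, ?_⟩
         simp only [hexTri, regionBetween, mem_Ioo, id_eq, Matrix.cons_val, mem_ofPred_eq]
         refine ⟨⟨?_, ?_⟩, ?_, ?_⟩ <;> linarith)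
      | (refine ⟨3, ?_⟩
         simp only [hexTri, regionBetween, mem_Ioo, id_eq, Matrix.cons_val, mem_ofPred_eq]
         refine ⟨⟨?_, ?_⟩, ?_, ?_⟩ <;> linarith)
      | (refine ⟨4, ?_⟩
         simp only [hexTri, regionBetween, mem_Ioo, id_eq, Matrix.cons_val, mem_ofPred_eq]
         refine ⟨⟨?_, ?_⟩, ?_, ?_⟩ <;> linarith)
      | (refine ⟨5, ?_⟩
         simp only [hexTri, regionBetween, mem_Ioo, id_eq, Matrix.cons_val, mem_ofPred_eq]
         refine ⟨⟨?_, ?_⟩, ?_, ?_⟩ <;> linarith)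
  · right
    have habs : ∀ a : ℝ, a ≠ c → a ≠ -c → |a| ≠ c := fun a h h' habs => by
      rcases abs_choice a with e | e <;> rw [e] at habs
      exacts [h habs, h' (by linarith)]
    simp only [not_and_or, not_lt] at hin
    rcases hin with h | h | h
    · exact (h.lt_of_ne' (habs _ hp.1 hm.1)).trans_le (le_max_left _ _)
    · exact (h.lt_of_ne' (habs _ hp.2.1 hm.2.1)).trans_le
        (le_max_of_le_right (le_max_left _ _))
    · exact (h.lt_of_ne' (habs _ hp.2.2 hm.2.2)).trans_le
        (le_max_of_le_right (le_max_right _ _))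

lemma isOpen_regionBetween {f g : ℝ → ℝ} {s : Set ℝ} (hf : Continuous f) (hg : Continuous g)
    (hs : IsOpen s) : IsOpen (regionBetween f g s) :=
  (hs.preimage continuous_fst).inter
    ((isOpen_lt (hf.comp continuous_fst) continuous_snd).inter
      (isOpen_lt continuous_snd (hg.comp continuous_fst)))

lemma isOpen_hexTri (c : ℝ) (j : Fin 6) : IsOpen (hexTri c j) := by
  fin_cases j <;>
    simp only [hexTri, Fin.zero_eta, Fin.mk_one, Fin.reduceFinMk, Matrix.cons_val] <;>
    exact isOpen_regionBetween (by fun_prop) (by fun_prop) isOpen_Ioo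

lemma volume_regionBetween_Ioo {f g : ℝ → ℝ} {a b : ℝ} (hf : Continuous f) (hg : Continuous g)
    (hab : a ≤ b) (hfg : ∀ t ∈ Ioo a b, f t ≤ g t) :
    volume (regionBetween f g (Ioo a b)) = ENNReal.ofReal (∫ t in a..b, g t - f t) := by
  rw [Measure.volume_eq_prod, volume_regionBetween_eq_integral
    (hf.integrableOn_Icc.mono_set Ioo_subset_Icc_self)
    (hg.integrableOn_Icc.mono_set Ioo_subset_Icc_self) measurableSet_Ioo hfg,
    intervalIntegral.integral_of_le hab, integral_Ioc_eq_integral_Ioo]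
  rfl

lemma volume_hexTri {c : ℝ} (hc : 0 < c) (j : Fin 6) :
    volume (hexTri c j) = ENNReal.ofReal (c ^ 2 / 2) := by
  fin_cases j <;>
    simp only [hexTri, Fin.zero_eta, Fin.mk_one, Fin.reduceFinMk, Matrix.cons_val] <;>
    rw [volume_regionBetween_Ioo (by fun_prop) (by fun_prop) (by linarith)
      (fun t ht => by simp only [mem_Ioo, id_eq] at ht ⊢; linarith)] <;>
    rw [intervalIntegral.integral_sub (Continuous.intervalIntegrable (by fun_prop) _ _)
      (Continuous.intervalIntegrable (by fun_prop) _ _)] <;>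
    simp only [id_eq, integral_id, intervalIntegral.integral_const, intervalIntegral.integral_zero,
      intervalIntegral.integral_sub, intervalIntegral.integral_add,
      intervalIntegral.intervalIntegrable_id, intervalIntegrable_const, smul_eq_mul] <;>
    ring_nf

lemma ae_fst_ne (t : ℝ) : ∀ᵐ x : ℝ × ℝ, x.1 ≠ t := by
  rw [Measure.volume_eq_prod]
  exact (Measure.ae_prod_iff_ae_ae (measurable_fst (measurableSet_singleton t).compl)).2
    ((Measure.ae_ne volume t).mono fun _ h => Eventually.of_forall fun _ => h)

lemma ae_snd_ne {f : ℝ → ℝ} (hf : Measurable f) : ∀ᵐ x : ℝ × ℝ, x.2 ≠ f x.1 := by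
  rw [Measure.volume_eq_prod]
  exact (Measure.ae_prod_iff_ae_ae
    (measurableSet_eq_fun measurable_snd (hf.comp measurable_fst)).compl).2
    (Eventually.of_forall fun a => Measure.ae_ne volume (f a))

lemma ae_sub_ne (p : ℝ × ℝ) (t : ℝ) :
    ∀ᵐ x : ℝ × ℝ, (x - p).1 ≠ t ∧ (x - p).2 ≠ t ∧ (x - p).1 - (x - p).2 ≠ t := by
  filter_upwards [ae_fst_ne (p.1 + t), ae_snd_ne (f := fun _ => p.2 + t) measurable_const,
    ae_snd_ne (f := fun a => a - p.1 + p.2 - t) (by fun_prop)] with x h1 h2 h3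
  simp only [Prod.fst_sub, Prod.snd_sub]
  exact ⟨fun h => h1 (by linarith), fun h => h2 (by linarith), fun h => h3 (by linarith)⟩

lemma ae_mem_hexTri_or_lt_hexNorm (c : ℝ) (p : ℝ × ℝ) :
    ∀ᵐ x : ℝ × ℝ, (∃ j, x - p ∈ hexTri c j) ∨ c < hexNorm (x - p) := by
  filter_upwards [ae_sub_ne p 0, ae_sub_ne p c, ae_sub_ne p (-c)] with x h0 hp hm
  exact exists_mem_hexTri_or_lt_hexNorm h0 hp hm

lemma hat_eq_hexNorm (c : ℝ) (p x : ℝ × ℝ) :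
    hat c p x = max 0 (1 - hexNorm (x - p) / c) := rfl

lemma hat_comp_add_right (c : ℝ) (p s x : ℝ × ℝ) : hat c p (x + s) = hat c (p - s) x := by
  simp only [hat_eq_hexNorm, sub_sub_eq_add_sub]

lemma hat_comp_neg (c : ℝ) (p x : ℝ × ℝ) : hat c p (-x) = hat c (-p) x := by
  rw [hat_eq_hexNorm, hat_eq_hexNorm, sub_neg_eq_add, ← hexNorm_neg (x + p), neg_add']

lemma hat_comp_swap (c : ℝ) (p x : ℝ × ℝ) : hat c p x.swap = hat c p.swap x := by
  rw [hat_eq_hexNorm, hat_eq_hexNorm, ← hexNorm_swap, Prod.swap_sub, Prod.swap_swap]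

lemma hasFDerivAt_hat_of_mem {c : ℝ} (hc : 0 < c) {p x : ℝ × ℝ} {j : Fin 6}
    (hx : x - p ∈ hexTri c j) :
    HasFDerivAt (hat c p)
      (((hexDir j).1 / c) • ContinuousLinearMap.fst ℝ ℝ ℝ +
        ((hexDir j).2 / c) • ContinuousLinearMap.snd ℝ ℝ ℝ) x := by
  set L := ((hexDir j).1 / c) • ContinuousLinearMap.fst ℝ ℝ ℝ +
    ((hexDir j).2 / c) • ContinuousLinearMap.snd ℝ ℝ ℝ
  refine (L.hasFDerivAt.const_add (1 - L p)).congr_of_eventuallyEq ?_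
  filter_upwards [((isOpen_hexTri c j).preimage (continuous_sub_right p)).mem_nhds hx] with y hy
  have hlt := hexNorm_lt_of_mem_hexTri hy
  rw [hat_eq_hexNorm, max_eq_right (by rw [sub_nonneg, div_le_one hc]; exact hlt.le),
    hexNorm_eq_of_mem_hexTri hy]
  simp only [L, add_apply, smul_apply,
    ContinuousLinearMap.coe_fst', ContinuousLinearMap.coe_snd', smul_eq_mul, Prod.fst_sub,
    Prod.snd_sub]
  field_simp
  ring

lemma hasFDerivAt_hat_of_lt {c : ℝ} (hc : 0 < c) {p x : ℝ × ℝ} (hx : c < hexNorm (x - p)) :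
    HasFDerivAt (hat c p) (0 : ℝ × ℝ →L[ℝ] ℝ) x := by
  refine (hasFDerivAt_const 0 x).congr_of_eventuallyEq ?_
  have hcont : Continuous fun y : ℝ × ℝ => hexNorm (y - p) := by unfold hexNorm; fun_prop
  filter_upwards [continuousAt_const.eventually_lt hcont.continuousAt hx] with y hy
  rw [hat_eq_hexNorm, max_eq_left (by rw [sub_nonpos, one_le_div hc]; exact hy.le)]

lemma fderiv_hat_apply_of_mem {c : ℝ} (hc : 0 < c) {p x : ℝ × ℝ} {j : Fin 6}
    (hx : x - p ∈ hexTri c j) (d : ℝ × ℝ) :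
    fderiv ℝ (hat c p) x d = (d.1 * (hexDir j).1 + d.2 * (hexDir j).2) / c := by
  rw [(hasFDerivAt_hat_of_mem hc hx).fderiv]
  simp only [add_apply, smul_apply, ContinuousLinearMap.coe_fst', ContinuousLinearMap.coe_snd',
    smul_eq_mul]
  ring

lemma fderiv_hat_apply_of_lt {c : ℝ} (hc : 0 < c) {p x : ℝ × ℝ} (hx : c < hexNorm (x - p))
    (d : ℝ × ℝ) : fderiv ℝ (hat c p) x d = 0 := by
  rw [(hasFDerivAt_hat_of_lt hc hx).fderiv, zero_apply]

lemma ae_differentiableAt_hat {c : ℝ} (hc : 0 < c) (p : ℝ × ℝ) :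
    ∀ᵐ x, DifferentiableAt ℝ (hat c p) x := by
  filter_upwards [ae_mem_hexTri_or_lt_hexNorm c p] with x hx
  rcases hx with ⟨j, hj⟩ | hout
  exacts [(hasFDerivAt_hat_of_mem hc hj).differentiableAt,
    (hasFDerivAt_hat_of_lt hc hout).differentiableAt]

def gradDot (u v : ℝ × ℝ → ℝ) (x : ℝ × ℝ) : ℝ := pdx u x * pdx v x + pdy u x * pdy v x

lemma fderiv_apply_eq_pdx_pdy (f : ℝ × ℝ → ℝ) (x d : ℝ × ℝ) :
    fderiv ℝ f x d = d.1 * pdx f x + d.2 * pdy f x := by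
  conv_lhs => rw [show d = d.1 • ((1 : ℝ), (0 : ℝ)) + d.2 • ((0 : ℝ), (1 : ℝ)) by ext <;> simp]
  rw [map_add, map_smul, map_smul, smul_eq_mul, smul_eq_mul, pdx, pdy]

lemma dirR_eq_integral_gradDot (u v : ℝ × ℝ → ℝ) : dirR u v = ∫ x, gradDot u v x := rfl

lemma dirR_sum_left {ι : Type*} (s : Finset ι) (a : ι → ℝ) (f : ι → ℝ × ℝ → ℝ)
    (v : ℝ × ℝ → ℝ) (hf : ∀ i ∈ s, ∀ᵐ x, DifferentiableAt ℝ (f i) x)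
    (hint : ∀ i ∈ s, Integrable (gradDot (f i) v)) :
    dirR (fun x => ∑ i ∈ s, a i * f i x) v = ∑ i ∈ s, a i * dirR (f i) v := by
  simp_rw [dirR_eq_integral_gradDot, ← integral_const_mul]
  rw [← integral_finsetSum _ fun i hi => (hint i hi).const_mul (a i)]
  refine integral_congr_ae ?_
  filter_upwards [(eventually_all_finset s).2 hf] with x hx
  have hd := (HasFDerivAt.fun_sum fun i hi => (hx i hi).hasFDerivAt.const_mul (a i)).fderiv
  simp only [gradDot, pdx, pdy, hd, FunLike.coe_sum, Finset.sum_apply,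
    FunLike.coe_smul, Pi.smul_apply, smul_eq_mul, Finset.sum_mul, ←
    Finset.sum_add_distrib]
  exact Finset.sum_congr rfl fun i _ => by ring

lemma dirR_neg_left (u v : ℝ × ℝ → ℝ) : dirR (fun x => -u x) v = -dirR u v := by
  simp only [dirR_eq_integral_gradDot, ← integral_neg, gradDot, pdx, pdy, fderiv_fun_neg]
  congr 1 with x
  simp only [neg_apply]
  ring

lemma dirR_comp_add_right (u v : ℝ × ℝ → ℝ) (s : ℝ × ℝ) :
    dirR (fun x => u (x + s)) (fun x => v (x + s)) = dirR u v := by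
  simp only [dirR_eq_integral_gradDot, gradDot, pdx, pdy, fderiv_comp_add_right]
  exact integral_add_right_eq_self (fun x => gradDot u v x) s

lemma dirR_comp_equiv (A : (ℝ × ℝ) ≃L[ℝ] ℝ × ℝ) (hA : MeasurePreserving A volume volume)
    (hAorth : ∀ L M : ℝ × ℝ →L[ℝ] ℝ,
      L (A (1, 0)) * M (A (1, 0)) + L (A (0, 1)) * M (A (0, 1)) =
        L (1, 0) * M (1, 0) + L (0, 1) * M (0, 1))
    (u v : ℝ × ℝ → ℝ) : dirR (u ∘ A) (v ∘ A) = dirR u v := by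
  have hgrad : gradDot (u ∘ A) (v ∘ A) = fun x => gradDot u v (A x) := by
    ext x
    simp only [gradDot, pdx, pdy, A.comp_right_fderiv, ContinuousLinearMap.comp_apply,
      ContinuousLinearEquiv.coe_coe]
    exact hAorth _ _
  rw [dirR_eq_integral_gradDot, dirR_eq_integral_gradDot, hgrad]
  exact hA.integral_comp A.toHomeomorph.measurableEmbedding _

lemma dirR_comp_neg (u v : ℝ × ℝ → ℝ) : dirR (fun x => u (-x)) (fun x => v (-x)) = dirR u v :=
  dirR_comp_equiv (ContinuousLinearEquiv.neg ℝ) (Measure.measurePreserving_neg volume)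
    (fun L M => by simp only [ContinuousLinearEquiv.neg_apply, map_neg, neg_mul_neg]) u v

lemma dirR_comp_swap (u v : ℝ × ℝ → ℝ) :
    dirR (fun x => u x.swap) (fun x => v x.swap) = dirR u v :=
  dirR_comp_equiv (ContinuousLinearEquiv.prodComm ℝ ℝ ℝ)
    (by rw [Measure.volume_eq_prod]; exact Measure.measurePreserving_swap)
    (fun L M => by simp only [ContinuousLinearEquiv.prodComm_apply, Prod.swap_prod_mk]; ring)
    u v

lemma measurableSet_preimage_hexTri (c : ℝ) (p : ℝ × ℝ) (j : Fin 6) :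
    MeasurableSet ((· - p) ⁻¹' hexTri c j) :=
  (isOpen_hexTri c j).measurableSet.preimage (measurable_sub_const p)

lemma volume_preimage_hexTri {c : ℝ} (hc : 0 < c) (p : ℝ × ℝ) (j : Fin 6) :
    volume ((· - p) ⁻¹' hexTri c j) = ENNReal.ofReal (c ^ 2 / 2) := by
  simp_rw [sub_eq_add_neg]
  rw [measure_preimage_add_right, volume_hexTri hc]

lemma gradDot_hat_ae_eq {c : ℝ} (hc : 0 < c) (p : ℝ × ℝ) {V : ℝ × ℝ → ℝ} {g : Fin 6 → ℝ}
    (hV : ∀ j x, x - p ∈ hexTri c j → fderiv ℝ V x (hexDir j) = g j) :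
    gradDot (hat c p) V =ᵐ[volume]
      fun x => ∑ j, ((· - p) ⁻¹' hexTri c j).indicator (fun _ => g j / c) x := by
  filter_upwards [ae_mem_hexTri_or_lt_hexNorm c p] with x hx
  rcases hx with ⟨j, hj⟩ | hout
  · rw [Finset.sum_eq_single j (fun k _ hkj => indicator_of_notMem
      (show x ∉ (· - p) ⁻¹' hexTri c k from fun hk => hkj (eq_of_mem_hexTri hk hj)) _)
      (by simp), indicator_of_mem (show x ∈ (· - p) ⁻¹' hexTri c j from hj), ← hV j x hj,
      fderiv_apply_eq_pdx_pdy]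
    simp only [gradDot, pdx, pdy, fderiv_hat_apply_of_mem hc hj]
    ring
  · simp only [gradDot, pdx, pdy, fderiv_hat_apply_of_lt hc hout]
    rw [Finset.sum_eq_zero fun k _ => indicator_of_notMem (show x ∉ (· - p) ⁻¹' hexTri c k from
        fun hk => (hexNorm_lt_of_mem_hexTri hk).not_gt hout) _]
    ring

lemma integrable_indicator_preimage_hexTri {c : ℝ} (hc : 0 < c) (p : ℝ × ℝ) (j : Fin 6)
    (r : ℝ) : Integrable (((· - p) ⁻¹' hexTri c j).indicator fun _ => r) :=
  (integrableOn_const (by rw [volume_preimage_hexTri hc]; exact ENNReal.ofReal_ne_top)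
    ).integrable_indicator (measurableSet_preimage_hexTri c p j)

lemma integrable_gradDot_hat {c : ℝ} (hc : 0 < c) (p : ℝ × ℝ) {V : ℝ × ℝ → ℝ} {g : Fin 6 → ℝ}
    (hV : ∀ j x, x - p ∈ hexTri c j → fderiv ℝ V x (hexDir j) = g j) :
    Integrable (gradDot (hat c p) V) :=
  (integrable_finsetSum _ fun j _ => integrable_indicator_preimage_hexTri hc p j _).congr
    (gradDot_hat_ae_eq hc p hV).symm

lemma dirR_hat_eq_sum {c : ℝ} (hc : 0 < c) (p : ℝ × ℝ) {V : ℝ × ℝ → ℝ} {g : Fin 6 → ℝ}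
    (hV : ∀ j x, x - p ∈ hexTri c j → fderiv ℝ V x (hexDir j) = g j) :
    dirR (hat c p) V = c / 2 * ∑ j, g j := by
  rw [dirR_eq_integral_gradDot, integral_congr_ae (gradDot_hat_ae_eq hc p hV),
    integral_finsetSum _ fun j _ => integrable_indicator_preimage_hexTri hc p j _, Finset.mul_sum]
  refine Finset.sum_congr rfl fun j _ => ?_
  rw [integral_indicator_const _ (measurableSet_preimage_hexTri c p j), measureReal_def,
    volume_preimage_hexTri hc, ENNReal.toReal_ofReal (by positivity), smul_eq_mul]
  field_simp

/-- `ψ⁵` for `i = k = 0`: the fine hats `φ¹_{(-1,0)} + φ¹_{(0,1)} - φ¹_{(0,-1)} - φ¹_{(1,0)}`. -/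
def wavelet (h : ℝ) : ℝ × ℝ → ℝ := fun x =>
  hat (h / 2) (-(h / 2), 0) x + hat (h / 2) (0, h / 2) x - hat (h / 2) (0, -(h / 2)) x -
    hat (h / 2) (h / 2, 0) x

lemma wavelet_comp_neg (h : ℝ) (x : ℝ × ℝ) : wavelet h (-x) = -wavelet h x := by
  simp only [wavelet, hat_comp_neg, Prod.neg_mk, neg_neg, neg_zero]
  ring

lemma wavelet_comp_swap (h : ℝ) (x : ℝ × ℝ) : wavelet h x.swap = -wavelet h x := by
  simp only [wavelet, hat_comp_swap, Prod.swap_prod_mk]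
  ring

lemma wavelet_eq_sum (h : ℝ) : wavelet h = fun x => ∑ i : Fin 4, ![1, 1, -1, -1] i *
    hat (h / 2) (![(-(h / 2), 0), (0, h / 2), (0, -(h / 2)), (h / 2, 0)] i) x := by
  ext x
  simp only [wavelet, Fin.sum_univ_four, Matrix.cons_val, one_mul, neg_mul]
  ring

lemma coarseHat_comp_neg (h : ℝ) (m n : ℤ) (x : ℝ × ℝ) :
    coarseHat h m n (-x) = coarseHat h (-m) (-n) x := by
  simp [coarseHat, hat_comp_neg]

lemma coarseHat_comp_swap (h : ℝ) (m n : ℤ) (x : ℝ × ℝ) :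
    coarseHat h m n x.swap = coarseHat h n m x := by
  simp [coarseHat, hat_comp_swap]

lemma coarseHat_comp_add_right (h : ℝ) (m n i k : ℤ) (x : ℝ × ℝ) :
    coarseHat h m n (x + (i * h, k * h)) = coarseHat h (m - i) (n - k) x := by
  simp [coarseHat, hat_comp_add_right, sub_mul]

lemma fineHat_wavelet_comp_add_right (h : ℝ) (i k : ℤ) (x : ℝ × ℝ) :
    fineHat h (2 * i - 1) (2 * k) (x + (i * h, k * h)) +
        fineHat h (2 * i) (2 * k + 1) (x + (i * h, k * h)) -
        fineHat h (2 * i) (2 * k - 1) (x + (i * h, k * h)) -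
        fineHat h (2 * i + 1) (2 * k) (x + (i * h, k * h)) = wavelet h x := by
  simp only [fineHat, wavelet, hat_comp_add_right]
  congr 4 <;> simp only [Prod.mk_sub_mk, Prod.mk.injEq] <;> push_cast <;> constructor <;> ring

lemma dirR_wavelet_comp_neg (h : ℝ) (m n : ℤ) :
    dirR (wavelet h) (coarseHat h m n) = -dirR (wavelet h) (coarseHat h (-m) (-n)) := by
  rw [← dirR_comp_neg]
  simp_rw [wavelet_comp_neg, coarseHat_comp_neg]
  exact dirR_neg_left _ _

lemma dirR_wavelet_comp_swap (h : ℝ) (m n : ℤ) :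
    dirR (wavelet h) (coarseHat h m n) = -dirR (wavelet h) (coarseHat h n m) := by
  rw [← dirR_comp_swap]
  simp_rw [wavelet_comp_swap, coarseHat_comp_swap]
  exact dirR_neg_left _ _

lemma dirR_wavelet_eq {h : ℝ} (hh : 0 < h) {V : ℝ × ℝ → ℝ} {g₀ g₁ g₂ g₃ : Fin 6 → ℝ}
    (h₀ : ∀ j x, x - (-(h / 2), 0) ∈ hexTri (h / 2) j → fderiv ℝ V x (hexDir j) = g₀ j)
    (h₁ : ∀ j x, x - (0, h / 2) ∈ hexTri (h / 2) j → fderiv ℝ V x (hexDir j) = g₁ j)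
    (h₂ : ∀ j x, x - (0, -(h / 2)) ∈ hexTri (h / 2) j → fderiv ℝ V x (hexDir j) = g₂ j)
    (h₃ : ∀ j x, x - (h / 2, 0) ∈ hexTri (h / 2) j → fderiv ℝ V x (hexDir j) = g₃ j) :
    dirR (wavelet h) V = h / 4 * (∑ j, g₀ j + ∑ j, g₁ j - ∑ j, g₂ j - ∑ j, g₃ j) := by
  have hc : 0 < h / 2 := by positivity
  have hV : ∀ i j x, x - ![(-(h / 2), 0), (0, h / 2), (0, -(h / 2)), (h / 2, 0)] i ∈
      hexTri (h / 2) j → fderiv ℝ V x (hexDir j) = ![g₀, g₁, g₂, g₃] i j := by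
    intro i
    fin_cases i
    exacts [h₀, h₁, h₂, h₃]
  rw [wavelet_eq_sum, dirR_sum_left _ _ _ _ (fun i _ => ae_differentiableAt_hat hc _)
    (fun i _ => integrable_gradDot_hat hc _ (hV i)), Fin.sum_univ_four]
  simp only [dirR_hat_eq_sum hc _ (hV _)]
  simp only [Matrix.cons_val, one_mul, neg_mul]
  ring

lemma dirR_wavelet_eq_zero_of_two_le {h : ℝ} (hh : 0 < h) {m n : ℤ}
    (hmn : 2 ≤ hexNorm ((m : ℝ), (n : ℝ))) : dirR (wavelet h) (coarseHat h m n) = 0 := by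
  have hq : 2 * h ≤ hexNorm ((m : ℝ) * h, (n : ℝ) * h) := by
    rw [hexNorm_mul_right _ _ _ hh.le]; nlinarith
  have hV : ∀ p : ℝ × ℝ, hexNorm p = h / 2 → ∀ j x, x - p ∈ hexTri (h / 2) j →
      fderiv ℝ (coarseHat h m n) x (hexDir j) = 0 := by
    intro p hp j x hx
    refine fderiv_hat_apply_of_lt hh ?_ _
    have h1 := hexNorm_add_le (-(x - ((m : ℝ) * h, (n : ℝ) * h))) x
    have h2 := hexNorm_add_le (x - p) p
    rw [neg_sub, sub_add_cancel, hexNorm_sub_comm] at h1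
    rw [sub_add_cancel] at h2
    linarith [hexNorm_lt_of_mem_hexTri hx]
  have hc : 0 < h / 2 := by positivity
  rw [dirR_wavelet_eq hh (hV _ ?_) (hV _ ?_) (hV _ ?_) (hV _ ?_)] <;>
    simp [hexNorm, hc.le]

lemma fderiv_coarseHat_one_zero_apply_hexDir {h : ℝ} (hh : 0 < h) (j : Fin 6) (x : ℝ × ℝ) :
    (x - (0, -(h / 2)) ∈ hexTri (h / 2) j →
      fderiv ℝ (hat h (h, 0)) x (hexDir j) = ![-1, 0, 0, 0, 0, -1] j / h) ∧
    (x - (h / 2, 0) ∈ hexTri (h / 2) j →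
      fderiv ℝ (hat h (h, 0)) x (hexDir j) = ![-1, 1, 2, 1, 0, -1] j / h) := by
  fin_cases j <;> refine ⟨fun hx => ?_, fun hx => ?_⟩ <;>
    simp only [hexTri, regionBetween, mem_Ioo, id_eq, Fin.zero_eta, Fin.mk_one, Fin.reduceFinMk,
      Matrix.cons_val, mem_ofPred_eq, Prod.fst_sub, Prod.snd_sub] at hx <;>
    obtain ⟨⟨h1, h2⟩, h3, h4⟩ := hx
  -- each fine triangle lies in the coarse triangle 2 or 3, or to the left of the coarse support
  all_goals first
    | (refine (fderiv_hat_apply_of_lt hh ((lt_abs.2 (Or.inr ?_)).trans_le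
        (abs_fst_le_hexNorm _)) _).trans ?_
       · simp only [Prod.fst_sub]; linarith
       · simp)
    | (refine (fderiv_hat_apply_of_mem hh (j := 2) ?_ _).trans ?_
       · simp only [hexTri, regionBetween, mem_Ioo, id_eq, Matrix.cons_val, mem_ofPred_eq,
           Prod.fst_sub, Prod.snd_sub]
         refine ⟨⟨?_, ?_⟩, ?_, ?_⟩ <;> linarith
       · simp only [hexDir, Matrix.cons_val]; norm_num)
    | (refine (fderiv_hat_apply_of_mem hh (j := 3) ?_ _).trans ?_
       · simp only [hexTri, regionBetween, mem_Ioo, id_eq, Matrix.cons_val, mem_ofPred_eq,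
           Prod.fst_sub, Prod.snd_sub]
         refine ⟨⟨?_, ?_⟩, ?_, ?_⟩ <;> linarith
       · simp only [hexDir, Matrix.cons_val]; norm_num)

lemma dirR_wavelet_coarseHat_one_zero {h : ℝ} (hh : 0 < h) :
    dirR (wavelet h) (coarseHat h 1 0) = 0 := by
  -- the fine hats at `(-h/2, 0)` and `(0, h/2)` live in `x.1 < 0` and `x.1 < x.2`, where the
  -- coarse hat vanishes
  have h₀ : ∀ j x, x - (-(h / 2), 0) ∈ hexTri (h / 2) j →
      fderiv ℝ (hat h (h, 0)) x (hexDir j) = 0 := by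
    intro j x hx
    have hin := (abs_fst_le_hexNorm _).trans_lt (hexNorm_lt_of_mem_hexTri hx)
    refine fderiv_hat_apply_of_lt hh ((lt_abs.2 (Or.inr ?_)).trans_le (abs_fst_le_hexNorm _)) _
    simp only [Prod.fst_sub, abs_lt] at hin ⊢
    linarith
  have h₁ : ∀ j x, x - (0, h / 2) ∈ hexTri (h / 2) j →
      fderiv ℝ (hat h (h, 0)) x (hexDir j) = 0 := by
    intro j x hx
    have hin := (abs_fst_sub_snd_le_hexNorm _).trans_lt (hexNorm_lt_of_mem_hexTri hx)
    refine fderiv_hat_apply_of_lt hh ((lt_abs.2 (Or.inr ?_)).trans_le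
      (abs_fst_sub_snd_le_hexNorm _)) _
    simp only [Prod.fst_sub, Prod.snd_sub, abs_lt] at hin ⊢
    linarith
  rw [show coarseHat h 1 0 = hat h (h, 0) by simp [coarseHat],
    dirR_wavelet_eq hh h₀ h₁ (fun j x => (fderiv_coarseHat_one_zero_apply_hexDir hh j x).1)
      (fun j x => (fderiv_coarseHat_one_zero_apply_hexDir hh j x).2)]
  simp only [Fin.sum_univ_six, Matrix.cons_val]
  ring

lemma dirR_wavelet_eq_zero {h : ℝ} (hh : 0 < h) (m n : ℤ) :
    dirR (wavelet h) (coarseHat h m n) = 0 := by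
  by_cases hfar : 2 ≤ hexNorm ((m : ℝ), (n : ℝ))
  · exact dirR_wavelet_eq_zero_of_two_le hh hfar
  -- the remaining nodes `(0, 0), ±(1, 0), ±(0, 1), ±(1, 1)` reduce to `(1, 0)` by the reflections
  simp only [hexNorm, not_le, max_lt_iff, abs_lt] at hfar
  obtain ⟨⟨hm₁, hm₂⟩, ⟨hn₁, hn₂⟩, hmn₁, hmn₂⟩ := hfar
  have hm₁' : -2 < m := by exact_mod_cast hm₁
  have hm₂' : m < 2 := by exact_mod_cast hm₂
  have hn₁' : -2 < n := by exact_mod_cast hn₁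
  have hn₂' : n < 2 := by exact_mod_cast hn₂
  have hmn : -2 < m - n ∧ m - n < 2 := ⟨by exact_mod_cast hmn₁, by exact_mod_cast hmn₂⟩
  have h10 := dirR_wavelet_coarseHat_one_zero hh
  have h01 := dirR_wavelet_comp_swap h 0 1
  have hm10 := dirR_wavelet_comp_neg h (-1) 0
  have h0m1 := dirR_wavelet_comp_neg h 0 (-1)
  have h00 := dirR_wavelet_comp_neg h 0 0
  have h11 := dirR_wavelet_comp_swap h 1 1
  have hm1m1 := dirR_wavelet_comp_swap h (-1) (-1)
  simp only [neg_neg, neg_zero] at hm10 h0m1 h00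
  interval_cases m <;> interval_cases n <;> first | omega | linarith

/-- The interior wavelet of third kind
ψ⁵ = φ¹_{(2i−1,2k)} + φ¹_{(2i,2k+1)} − φ¹_{(2i,2k−1)} − φ¹_{(2i+1,2k)}
is Dirichlet-orthogonal to every coarse hat function. -/
theorem stmt9 (h : ℝ) (hh : 0 < h) (i k m n : ℤ) :
    dirR
      (fun x => fineHat h (2 * i - 1) (2 * k) x + fineHat h (2 * i) (2 * k + 1) x -
        fineHat h (2 * i) (2 * k - 1) x - fineHat h (2 * i + 1) (2 * k) x)
      (coarseHat h m n) = 0 := by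
  rw [← dirR_comp_add_right _ _ ((i : ℝ) * h, (k : ℝ) * h)]
  simp only [fineHat_wavelet_comp_add_right, coarseHat_comp_add_right]
  exact dirR_wavelet_eq_zero hh (m - i) (n - k)
end
end

section
/- Let D be a symmetric positive definite N×N real matrix, B an n×N matrix and C an (N−n)×N matrix, both of full row rank, such that B D Cᵀ = 0. Then Bᵀ(B D Bᵀ)^{−1} B + Cᵀ(C D Cᵀ)^{−1} C = D^{−1}. -/
/-!
Stack `B` over `C` into the square matrix `M`. Then `M D Mᵀ` is block diagonal with the invertible
blocks `B D Bᵀ` and `C D Cᵀ`, so the left-hand side is `Mᵀ (M D Mᵀ)⁻¹ M`. As `D Mᵀ (M D Mᵀ)⁻¹` is a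
right inverse of the square matrix `M`, it is also a left inverse, i.e. `D Mᵀ (M D Mᵀ)⁻¹ M = 1`.
-/

open Matrix

namespace Matrix

variable {R K : Type*} {m m₁ m₂ n : Type*}

theorem vecMul_injective_of_rank_eq_card [Field K] [Fintype m] [Fintype n] {A : Matrix m n K}
    (hA : A.rank = Fintype.card m) : Function.Injective A.vecMul :=
  vecMul_injective_iff.2 <| linearIndependent_iff_card_eq_finrank_span.2 <| by
    rw [← hA, rank_eq_finrank_span_row, Set.finrank]

theorem PosDef.mul_mul_transpose_of_rank_eq_card [Fintype m] [Fintype n]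
    {D : Matrix n n ℝ} (hD : D.PosDef) {A : Matrix m n ℝ} (hA : A.rank = Fintype.card m) :
    (A * D * Aᵀ).PosDef := by
  simpa only [conjTranspose_eq_transpose_of_trivial] using
    hD.mul_mul_conjTranspose_same (vecMul_injective_of_rank_eq_card hA)

theorem fromRows_mul_mul_transpose_fromRows [Semiring R] [Fintype n]
    (B : Matrix m₁ n R) (C : Matrix m₂ n R) (D : Matrix n n R) :
    fromRows B C * D * (fromRows B C)ᵀ =
      fromBlocks (B * D * Bᵀ) (B * D * Cᵀ) (C * D * Bᵀ) (C * D * Cᵀ) := by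
  rw [transpose_fromRows, Matrix.mul_assoc, mul_fromCols, fromRows_mul_fromCols]
  simp only [Matrix.mul_assoc]

theorem fromCols_mul_inv_fromBlocks_diagonal_mul_fromRows [CommRing R]
    [Fintype m₁] [Fintype m₂] [DecidableEq m₁] [DecidableEq m₂]
    (A₁ : Matrix n m₁ R) (A₂ : Matrix n m₂ R) (P : Matrix m₁ m₁ R) (Q : Matrix m₂ m₂ R)
    (B₁ : Matrix m₁ n R) (B₂ : Matrix m₂ n R) (hPQ : IsUnit P ↔ IsUnit Q) :
    fromCols A₁ A₂ * (fromBlocks P 0 0 Q)⁻¹ * fromRows B₁ B₂ =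
      A₁ * P⁻¹ * B₁ + A₂ * Q⁻¹ * B₂ := by
  rw [inv_fromBlocks_zero₂₁_of_isUnit_iff _ _ _ hPQ, fromCols_mul_fromBlocks,
    fromCols_mul_fromRows]
  simp

theorem inv_eq_mul_inv_mul_mul_mul [CommRing R] [Fintype m] [Fintype n]
    [DecidableEq m] [DecidableEq n] (e : m ≃ n) (M : Matrix m n R) (D : Matrix n n R)
    (A : Matrix n m R) (h : IsUnit (M * D * A)) :
    D⁻¹ = A * (M * D * A)⁻¹ * M := by
  have hright : M * (D * A * (M * D * A)⁻¹) = 1 := by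
    rw [← Matrix.mul_assoc, ← Matrix.mul_assoc, mul_nonsing_inv _ ((isUnit_iff_isUnit_det _).1 h)]
  refine inv_eq_right_inv ?_
  simpa only [Matrix.mul_assoc] using (mul_eq_one_comm_of_equiv e).1 hright

end Matrix

/-- If D is symmetric positive definite, B and C have full row rank with
complementary row counts, and B D Cᵀ = 0, then
Bᵀ(B D Bᵀ)⁻¹B + Cᵀ(C D Cᵀ)⁻¹C = D⁻¹. -/
theorem stmt12 (N n : ℕ) (hn : n ≤ N)
    (D : Matrix (Fin N) (Fin N) ℝ) (hD : D.PosDef)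
    (B : Matrix (Fin n) (Fin N) ℝ) (C : Matrix (Fin (N - n)) (Fin N) ℝ)
    (hB : B.rank = n) (hC : C.rank = N - n)
    (hBC : B * D * C.transpose = 0) :
    B.transpose * (B * D * B.transpose)⁻¹ * B +
      C.transpose * (C * D * C.transpose)⁻¹ * C = D⁻¹ := by
  have hBDB : (B * D * Bᵀ).PosDef := hD.mul_mul_transpose_of_rank_eq_card (by simpa using hB)
  have hCDC : (C * D * Cᵀ).PosDef := hD.mul_mul_transpose_of_rank_eq_card (by simpa using hC)
  have hDt : Dᵀ = D := hD.isHermitian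
  have hCB : C * D * Bᵀ = 0 := by
    simpa [Matrix.mul_assoc, hDt] using congrArg transpose hBC
  have hgram : fromRows B C * D * (fromRows B C)ᵀ = fromBlocks (B * D * Bᵀ) 0 0 (C * D * Cᵀ) := by
    rw [fromRows_mul_mul_transpose_fromRows, hBC, hCB]
  have e : Fin n ⊕ Fin (N - n) ≃ Fin N := finSumFinEquiv.trans (finCongr (by omega))
  rw [inv_eq_mul_inv_mul_mul_mul e (fromRows B C) D (fromRows B C)ᵀ
      (by rw [hgram]; exact isUnit_fromBlocks_zero₂₁.2 ⟨hBDB.isUnit, hCDC.isUnit⟩),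
    hgram, transpose_fromRows, fromCols_mul_inv_fromBlocks_diagonal_mul_fromRows _ _ _ _ _ _
      (iff_of_true hBDB.isUnit hCDC.isUnit)]
end
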